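/- arXiv:2108.00535 — 3 statements merged into one kernel-verified Lean document; each statement's English description precedes it below -/
import Mathlib

section
/- Let U be a random variable supported on (0,1). If E(⌊c - U⌋) = c - 1 for every real c ∈ (0,1), then U is uniformly distributed on (0,1), i.e., P(0 < U ≤ c) = c for all c ∈ (0,1). -/
/-! Since `c - U ∈ (-1, 1)` almost surely, `⌊c - U⌋ = 𝟙{U ≤ c} - 1` almost surely, so the
hypothesis on the expectation says exactly that `P(U ≤ c) = c`. -/

open MeasureTheory ProbabilityTheory

theorem Int.floor_eq_indicator_Ici_sub_one {x : ℝ} (hx : x ∈ Set.Ico (-1) 1) :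
    (⌊x⌋ : ℝ) = (Set.Ici 0).indicator 1 x - 1 := by
  obtain ⟨hlo, hhi⟩ := hx
  by_cases h : 0 ≤ x
  · rw [Set.indicator_of_mem (Set.mem_Ici.2 h), Int.floor_eq_zero_iff.2 ⟨h, hhi⟩]
    simp
  · have hfloor : ⌊x⌋ = -1 := Int.floor_eq_iff.2 ⟨by simpa using hlo, by simp; linarith⟩
    rw [Set.indicator_of_notMem (by simpa using h), hfloor]
    simp

theorem integral_floor_eq_measureReal_sub_one {Ω : Type*} [MeasurableSpace Ω]
    {μ : Measure Ω} [IsProbabilityMeasure μ] {X : Ω → ℝ} (hX : Measurable X)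
    (hbound : ∀ᵐ ω ∂μ, X ω ∈ Set.Ico (-1) 1) :
    ∫ ω, (⌊X ω⌋ : ℝ) ∂μ = μ.real {ω | 0 ≤ X ω} - 1 := by
  have hS : MeasurableSet {ω | 0 ≤ X ω} := measurableSet_le measurable_const hX
  calc ∫ ω, (⌊X ω⌋ : ℝ) ∂μ
        = ∫ ω, ({ω | 0 ≤ X ω}.indicator 1 ω - 1 : ℝ) ∂μ := by
        refine integral_congr_ae ?_
        filter_upwards [hbound] with ω hω
        rw [Int.floor_eq_indicator_Ici_sub_one hω]
        rfl
    _ = μ.real {ω | 0 ≤ X ω} - 1 := by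
        rw [integral_sub ((integrable_const 1).indicator hS) (integrable_const 1),
          integral_indicator_one hS]
        simp

theorem uniform_of_floor_expectation
    {Ω : Type*} [MeasureSpace Ω] [IsProbabilityMeasure (ℙ : Measure Ω)]
    (U : Ω → ℝ) (hmeas : Measurable U)
    (hsupp : ∀ᵐ ω ∂ℙ, U ω ∈ Set.Ioo (0:ℝ) 1)
    (hexp : ∀ c ∈ Set.Ioo (0:ℝ) 1, ∫ ω, (⌊c - U ω⌋ : ℝ) ∂ℙ = c - 1) :
    ∀ c ∈ Set.Ioo (0:ℝ) 1, ℙ {ω | 0 < U ω ∧ U ω ≤ c} = ENNReal.ofReal c := by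
  intro c hc
  have hbound : ∀ᵐ ω ∂ℙ, c - U ω ∈ Set.Ico (-1) 1 := by
    filter_upwards [hsupp] with ω hω
    exact ⟨by linarith [hω.2, hc.1], by linarith [hω.1, hc.2]⟩
  have hcdf : (ℙ : Measure Ω).real {ω | U ω ≤ c} = c := by
    have h := hexp c hc
    rw [integral_floor_eq_measureReal_sub_one (X := fun ω ↦ c - U ω)
      (measurable_const.sub hmeas) hbound] at h
    simpa only [sub_nonneg, sub_left_inj] using h
  have hae : {ω | 0 < U ω ∧ U ω ≤ c} =ᵐ[(ℙ : Measure Ω)] {ω | U ω ≤ c} := by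
    filter_upwards [hsupp] with ω hω
    exact propext ⟨And.right, And.intro hω.1⟩
  rw [measure_congr hae, ← ofReal_measureReal, hcdf]
end

section
/- For a deterministic point process with inter-arrival t > 0 (events at multiples of t), if the window starts at x with frac(x/t) ~ U[0,1) and the window length is u + η where η is an integrable random variable independent of x with mean 0 (and u + η ≥ 0 a.s.), then the expected number of events in the window is u/t. -/
/-!
Rescaling by `t`, the count is `⌊G + Z⌋` with `G = fract (x / t)` uniform on `[0, 1)` and
`Z = (u + η) / t` independent of `G`. By Fubini it suffices that `∫ g in [0, 1), ⌊g + z⌋ = z`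
for every real `z`: this is `∫ s in z..z+1, ⌊s⌋`, and since `⌊s⌋ = s - fract s` with `fract`
`1`-periodic of mean `1/2`, it equals `(z + 1/2) - 1/2`.
-/

open MeasureTheory ProbabilityTheory Set intervalIntegral

lemma Int.floor_add_sub_floor {α : Type*} [Ring α] [LinearOrder α] [IsStrictOrderedRing α]
    [FloorRing α] (a b : α) : ⌊a + b⌋ - ⌊a⌋ = ⌊Int.fract a + b⌋ := by
  rw [sub_eq_iff_eq_add]
  conv_lhs => rw [← Int.fract_add_floor a, add_right_comm, Int.floor_add_intCast]

lemma integral_fract_zero_one : ∫ s in (0 : ℝ)..1, Int.fract s = 1 / 2 := by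
  rw [integral_of_le zero_le_one, ← integral_Ico_eq_integral_Ioc,
    setIntegral_congr_fun measurableSet_Ico fun s hs => Int.fract_eq_self.2 hs,
    integral_Ico_eq_integral_Ioc, ← integral_of_le zero_le_one, integral_id]
  norm_num

lemma integral_fract_add_one (a : ℝ) : ∫ s in a..a + 1, Int.fract s = 1 / 2 := by
  rw [(Int.fract_periodic ℝ).intervalIntegral_add_eq a 0, zero_add, integral_fract_zero_one]

lemma integral_floor_add_one (a : ℝ) : ∫ s in a..a + 1, (⌊s⌋ : ℝ) = a := by
  have hfloor : IntervalIntegrable (fun s : ℝ => (⌊s⌋ : ℝ)) volume a (a + 1) :=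
    (Int.cast_mono.comp Int.floor_mono).intervalIntegrable
  have h := integral_fract_add_one a
  simp only [← Int.self_sub_floor] at h
  rw [integral_sub intervalIntegrable_id hfloor, integral_id] at h
  linarith

lemma setIntegral_Ico_floor_add (z : ℝ) : ∫ g in Ico (0 : ℝ) 1, (⌊g + z⌋ : ℝ) = z := by
  rw [integral_Ico_eq_integral_Ioc, ← integral_of_le zero_le_one,
    integral_comp_add_right (fun s => (⌊s⌋ : ℝ)), zero_add, add_comm 1 z, integral_floor_add_one]

lemma integrable_floor_add_prod {μ ν : Measure ℝ} [IsFiniteMeasure μ] [IsFiniteMeasure ν]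
    (hμ : Integrable id μ) (hν : Integrable id ν) :
    Integrable (fun p : ℝ × ℝ => (⌊p.2 + p.1⌋ : ℝ)) (μ.prod ν) := by
  have hsum : Integrable (fun p : ℝ × ℝ => p.2 + p.1) (μ.prod ν) :=
    (hν.comp_snd μ).add (hμ.comp_fst ν)
  have hfract : Integrable (fun p : ℝ × ℝ => Int.fract (p.2 + p.1)) (μ.prod ν) :=
    (integrable_const (1 : ℝ)).mono'
      (measurable_snd.add measurable_fst).fract.aestronglyMeasurable
      (ae_of_all _ fun p => by
        rw [Real.norm_of_nonneg (Int.fract_nonneg _)]; exact (Int.fract_lt_one _).le)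
  exact (hsum.sub hfract).congr (ae_of_all _ fun p => Int.self_sub_fract _)

theorem integral_floor_add_of_indepFun_uniform {Ω : Type*} [MeasurableSpace Ω] {P : Measure Ω}
    [IsProbabilityMeasure P] {G Z : Ω → ℝ} (hG : P.map G = volume.restrict (Ico (0 : ℝ) 1))
    (hZ : Integrable Z P) (hind : IndepFun Z G P) :
    ∫ ω, (⌊G ω + Z ω⌋ : ℝ) ∂P = ∫ ω, Z ω ∂P := by
  have hGm : AEMeasurable G P := .of_map_ne_zero (by simp [hG])
  have := Measure.isProbabilityMeasure_map (μ := P) hZ.aemeasurable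
  have hlaw : P.map (fun ω => (Z ω, G ω)) = (P.map Z).prod (volume.restrict (Ico (0 : ℝ) 1)) := by
    rw [← hG]; exact (indepFun_iff_map_prod_eq_prod_map_map hZ.aemeasurable hGm).1 hind
  have hZ' : Integrable id (P.map Z) :=
    (integrable_map_measure aestronglyMeasurable_id hZ.aemeasurable).2 hZ
  have hU : Integrable id (volume.restrict (Ico (0 : ℝ) 1)) :=
    continuous_id.integrableOn_Icc.mono_set Ico_subset_Icc_self
  have hf : Measurable fun p : ℝ × ℝ => (⌊p.2 + p.1⌋ : ℝ) :=
    measurable_from_top.comp (measurable_snd.add measurable_fst).floor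
  calc ∫ ω, (⌊G ω + Z ω⌋ : ℝ) ∂P
      = ∫ p, (⌊p.2 + p.1⌋ : ℝ) ∂(P.map fun ω => (Z ω, G ω)) :=
        (integral_map (hZ.aemeasurable.prodMk hGm) hf.aestronglyMeasurable).symm
    _ = ∫ z, (∫ g in Ico (0 : ℝ) 1, (⌊g + z⌋ : ℝ)) ∂P.map Z := by
        rw [hlaw]
        exact integral_prod _ (integrable_floor_add_prod hZ' hU)
    _ = ∫ ω, Z ω ∂P := by
        simp only [setIntegral_Ico_floor_add]
        exact integral_map hZ.aemeasurable aestronglyMeasurable_id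

theorem deterministic_renewal_perturbed_window_expected_count_general
    {Ω : Type*} [MeasureSpace Ω] [IsProbabilityMeasure (ℙ : Measure Ω)]
    (t : ℝ) (u : ℝ)
    (x η : Ω → ℝ)
    (hfrac : Measure.map (fun ω => Int.fract (x ω / t)) ℙ = volume.restrict (Set.Ico (0:ℝ) 1))
    (hindep : IndepFun η x ℙ)
    (hint : Integrable η ℙ)
    (hmean : ∫ ω, η ω ∂ℙ = 0) :
    ∫ ω, ((⌊(x ω + u + η ω) / t⌋ : ℝ) - (⌊x ω / t⌋ : ℝ)) ∂ℙ = u / t := by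
  have hind : IndepFun (fun ω => (u + η ω) / t) (fun ω => Int.fract (x ω / t)) ℙ :=
    hindep.comp ((measurable_const_add u).div_const t) (measurable_id.div_const t).fract
  calc ∫ ω, ((⌊(x ω + u + η ω) / t⌋ : ℝ) - (⌊x ω / t⌋ : ℝ)) ∂ℙ
      = ∫ ω, (⌊Int.fract (x ω / t) + (u + η ω) / t⌋ : ℝ) ∂ℙ := by
        simp only [add_assoc, add_div, ← Int.floor_add_sub_floor, Int.cast_sub]
    _ = ∫ ω, (u + η ω) / t ∂ℙ :=
        integral_floor_add_of_indepFun_uniform hfrac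
          (((integrable_const u).add hint).div_const t) hind
    _ = u / t := by
        rw [MeasureTheory.integral_div, integral_add (integrable_const u) hint, hmean]; simp

theorem deterministic_renewal_perturbed_window_expected_count
    {Ω : Type*} [MeasureSpace Ω] [IsProbabilityMeasure (ℙ : Measure Ω)]
    (t : ℝ) (ht : 0 < t) (u : ℝ)
    (x η : Ω → ℝ) (hmeasx : Measurable x) (hmeasη : Measurable η)
    (hfrac : Measure.map (fun ω => Int.fract (x ω / t)) ℙ = volume.restrict (Set.Ico (0:ℝ) 1))
    (hindep : IndepFun η x ℙ)
    (hint : Integrable η ℙ)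
    (hmean : ∫ ω, η ω ∂ℙ = 0)
    (hpos : ∀ᵐ ω ∂ℙ, 0 ≤ u + η ω)
    (hnotint : ∀ᵐ ω ∂ℙ, ∀ n : ℤ, (x ω + u + η ω) / t ≠ (n : ℝ)) :
    ∫ ω, ((⌊(x ω + u + η ω) / t⌋ : ℝ) - (⌊x ω / t⌋ : ℝ)) ∂ℙ = u / t :=
  deterministic_renewal_perturbed_window_expected_count_general t u x η hfrac hindep hint hmean
end

section
/- If Y_σ is a Gaussian random variable with fixed mean and variance σ² → ∞, then the fractional part Y_σ - ⌊Y_σ⌋ converges in distribution to the uniform distribution on [0,1). -/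
open MeasureTheory ProbabilityTheory Filter Set Topology Function

/-!
Cut `ℝ` into the unit cells `[n, n + 1]`. On a cell where a density `f` is monotone, both
`∫_n^{n+x} f` and `x ∫_n^{n+1} f` lie between `x f(n)` and `x f(n + 1)`, so they differ by at most
`|f (n + 1) - f n|`; on the cell containing the mode they differ by at most `sup f`. For a
unimodal density these differences telescope, so `|P(fract Y ≤ x) - x| ≤ 3 sup f`, and for
`N(m, σ²)` we have `sup f = 1 / √(2πσ²) → 0`.
-/

lemma summable_and_tsum_le_of_le_sub_succ {a h : ℕ → ℝ} (ha : 0 ≤ a) (hh : 0 ≤ h)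
    (hah : ∀ k, a k ≤ h k - h (k + 1)) : Summable a ∧ ∑' k, a k ≤ h 0 := by
  have hsum (n : ℕ) : ∑ k ∈ Finset.range n, a k ≤ h 0 :=
    calc ∑ k ∈ Finset.range n, a k ≤ ∑ k ∈ Finset.range n, (h k - h (k + 1)) :=
          Finset.sum_le_sum fun k _ ↦ hah k
      _ = h 0 - h n := Finset.sum_range_sub' h n
      _ ≤ h 0 := sub_le_self _ (hh n)
  exact ⟨summable_of_sum_range_le ha hsum, Real.tsum_le_of_sum_range_le ha hsum⟩

lemma summable_and_tsum_le_of_unimodal {a g : ℤ → ℝ} {n₀ : ℤ} {M : ℝ} (ha : 0 ≤ a)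
    (hg : ∀ n, g n ∈ Icc 0 M) (hlt : ∀ n < n₀, a n ≤ g (n + 1) - g n)
    (hgt : ∀ n > n₀, a n ≤ g n - g (n + 1)) :
    Summable a ∧ ∑' n, a n ≤ a n₀ + 2 * M := by
  obtain ⟨hright, hright_le⟩ := summable_and_tsum_le_of_le_sub_succ
    (a := fun k : ℕ ↦ a (k + 1 + n₀)) (h := fun k : ℕ ↦ g (k + 1 + n₀))
    (fun _ ↦ ha _) (fun _ ↦ (hg _).1) fun k ↦ by
      simpa [add_right_comm _ (1 : ℤ)] using hgt (k + 1 + n₀) (by omega)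
  obtain ⟨hleft, hleft_le⟩ := summable_and_tsum_le_of_le_sub_succ
    (a := fun k : ℕ ↦ a (-(k + 1) + n₀)) (h := fun k : ℕ ↦ g (-k + n₀))
    (fun _ ↦ ha _) (fun _ ↦ (hg _).1) fun k ↦ by
      have := hlt (-(k + 1) + n₀) (by omega)
      rwa [show -((k : ℤ) + 1) + n₀ + 1 = -k + n₀ by ring] at this
  have hshift : HasSum (a ∘ Equiv.addRight n₀) _ :=
    HasSum.of_add_one_of_neg_add_one (by exact_mod_cast hright.hasSum) hleft.hasSum
  rw [Equiv.hasSum_iff] at hshift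
  refine ⟨hshift.summable, hshift.tsum_eq ▸ ?_⟩
  simp only [comp_apply, Equiv.coe_addRight, Nat.cast_add, Nat.cast_one, zero_add,
    CharP.cast_eq_zero, neg_zero] at hright_le hleft_le ⊢
  linarith [(hg (1 + n₀)).2, (hg n₀).2]

lemma setOf_fract_le_eq_iUnion (x : ℝ) :
    {y : ℝ | Int.fract y ≤ x} = ⋃ n : ℤ, Icc (n : ℝ) (n + x) := by
  ext y
  simp only [mem_ofPred_eq, mem_iUnion, mem_Icc]
  constructor
  · exact fun h ↦ ⟨⌊y⌋, Int.floor_le y, by linarith [Int.self_sub_floor y]⟩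
  · rintro ⟨n, hny, hyn⟩
    have : (n : ℝ) ≤ ⌊y⌋ := by exact_mod_cast Int.le_floor.2 hny
    linarith [Int.self_sub_floor y]

lemma abs_intervalIntegral_sub_mul_le {f : ℝ → ℝ} {a x lo hi : ℝ} (hx : x ∈ Icc 0 1)
    (hf : IntervalIntegrable f volume a (a + 1)) (hlo : ∀ y ∈ Icc a (a + 1), lo ≤ f y)
    (hhi : ∀ y ∈ Icc a (a + 1), f y ≤ hi) :
    |(∫ y in a..a + x, f y) - x * ∫ y in a..a + 1, f y| ≤ hi - lo := by
  obtain ⟨hx₀, hx₁⟩ := hx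
  have hsub : Icc a (a + x) ⊆ Icc a (a + 1) := Icc_subset_Icc_right (by linarith)
  have hf' : IntervalIntegrable f volume a (a + x) :=
    hf.mono_set (by rwa [uIcc_of_le (by linarith), uIcc_of_le (by linarith)])
  have hcell : ∫ y in a..a + 1, f y ∈ Icc lo hi := by
    constructor
    · simpa using intervalIntegral.integral_mono_on (by linarith) intervalIntegrable_const hf hlo
    · simpa using intervalIntegral.integral_mono_on (by linarith) hf intervalIntegrable_const hhi
  have hpart : ∫ y in a..a + x, f y ∈ Icc (x * lo) (x * hi) := by
    constructor
    · simpa using intervalIntegral.integral_mono_on (by linarith) intervalIntegrable_const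
        hf' fun y hy ↦ hlo y (hsub hy)
    · simpa using intervalIntegral.integral_mono_on (by linarith) hf' intervalIntegrable_const
        fun y hy ↦ hhi y (hsub hy)
  rw [abs_le]
  constructor <;> nlinarith [hcell.1, hcell.2, hpart.1, hpart.2]

theorem abs_setIntegral_fract_le_sub_mul_integral_le {f : ℝ → ℝ} {c M x : ℝ} (hf : Integrable f)
    (hbound : ∀ y, f y ∈ Icc 0 M) (hmono : MonotoneOn f (Iic c)) (hanti : AntitoneOn f (Ici c))
    (hx : x ∈ Ico 0 1) :
    |(∫ y in {y | Int.fract y ≤ x}, f y) - x * ∫ y, f y| ≤ 3 * M := by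
  let d : ℤ → ℝ := fun n ↦ (∫ y in n..n + x, f y) - x * ∫ y in n..n + 1, f y
  have hdisj : Pairwise (Disjoint on fun n : ℤ ↦ Icc (n : ℝ) (n + x)) := fun i j hij ↦
    (pairwise_disjoint_Ico_intCast ℝ hij).mono (Icc_subset_Ico_right (by linarith [hx.2]))
      (Icc_subset_Ico_right (by linarith [hx.2]))
  have hpieces : HasSum (fun n : ℤ ↦ ∫ y in n..n + x, f y)
      (∫ y in {y | Int.fract y ≤ x}, f y) := by
    rw [setOf_fract_le_eq_iUnion]
    simpa [integral_Icc_eq_integral_Ioc, intervalIntegral.integral_of_le, hx.1] using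
      hasSum_integral_iUnion (fun n : ℤ ↦ measurableSet_Icc) hdisj hf.integrableOn
  have hcells : HasSum (fun n : ℤ ↦ ∫ y in n..n + 1, f y) (∫ y, f y) := by
    simpa using hf.hasSum_intervalIntegral 0
  have hd : HasSum d _ := hpieces.sub (hcells.mul_left x)
  have hcell (n : ℤ) {lo hi : ℝ} (hlo : ∀ y ∈ Icc (n : ℝ) (n + 1), lo ≤ f y)
      (hhi : ∀ y ∈ Icc (n : ℝ) (n + 1), f y ≤ hi) : |d n| ≤ hi - lo :=
    abs_intervalIntegral_sub_mul_le (Ico_subset_Icc_self hx) hf.intervalIntegrable hlo hhi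
  have hlt (n : ℤ) (hn : n < ⌊c⌋) : |d n| ≤ f ↑(n + 1) - f n := by
    have hnc : ((n + 1 : ℤ) : ℝ) ≤ c := (Int.cast_le.2 hn).trans (Int.floor_le c)
    push_cast at hnc ⊢
    exact hcell n (fun y hy ↦ hmono (by simp; linarith) (hy.2.trans hnc) hy.1)
      fun y hy ↦ hmono (hy.2.trans hnc) hnc hy.2
  have hgt (n : ℤ) (hn : ⌊c⌋ < n) : |d n| ≤ f n - f ↑(n + 1) := by
    have hcn : c ≤ n := (Int.lt_floor_add_one c).le.trans (by exact_mod_cast hn)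
    push_cast
    exact hcell n (fun y hy ↦ hanti (hcn.trans hy.1) (by simp; linarith) hy.2)
      fun y hy ↦ hanti hcn (hcn.trans hy.1) hy.1
  obtain ⟨hsum, hle⟩ := summable_and_tsum_le_of_unimodal (a := fun n ↦ |d n|)
    (g := fun n : ℤ ↦ f n) (fun _ ↦ abs_nonneg _) (fun n ↦ hbound n) hlt hgt
  have hcenter : |d ⌊c⌋| ≤ M := by
    simpa using hcell ⌊c⌋ (fun y _ ↦ (hbound y).1) fun y _ ↦ (hbound y).2
  calc |(∫ y in {y | Int.fract y ≤ x}, f y) - x * ∫ y, f y| = ‖∑' n, d n‖ := by rw [hd.tsum_eq]; rfl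
    _ ≤ ∑' n, ‖d n‖ := norm_tsum_le_tsum_norm hsum
    _ ≤ 3 * M := by simp only [Real.norm_eq_abs]; linarith

open Real NNReal

lemma gaussianPDFReal_le_inv_sqrt (m : ℝ) (v : ℝ≥0) (y : ℝ) :
    gaussianPDFReal m v y ≤ (√(2 * π * v))⁻¹ := by
  rw [gaussianPDFReal]
  refine mul_le_of_le_one_right (by positivity) (exp_le_one_iff.2 ?_)
  exact div_nonpos_of_nonpos_of_nonneg (neg_nonpos.2 (sq_nonneg _)) (by positivity)

lemma monotoneOn_gaussianPDFReal (m : ℝ) (v : ℝ≥0) :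
    MonotoneOn (gaussianPDFReal m v) (Iic m) := by
  intro a _ b hb hab
  rw [gaussianPDFReal, gaussianPDFReal]
  gcongr _ * rexp (?_ / _)
  nlinarith [mem_Iic.1 hb]

lemma antitoneOn_gaussianPDFReal (m : ℝ) (v : ℝ≥0) :
    AntitoneOn (gaussianPDFReal m v) (Ici m) := by
  intro a ha b _ hab
  rw [gaussianPDFReal, gaussianPDFReal]
  gcongr _ * rexp (?_ / _)
  nlinarith [mem_Ici.1 ha]

lemma abs_gaussianReal_fract_le_sub_le (m : ℝ) {v : ℝ≥0} (hv : v ≠ 0) {x : ℝ}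
    (hx : x ∈ Ico 0 1) :
    |(gaussianReal m v {y | Int.fract y ≤ x}).toReal - x| ≤ 3 * (√(2 * π * v))⁻¹ := by
  rw [gaussianReal_apply_eq_integral m hv,
    ENNReal.toReal_ofReal (integral_nonneg (gaussianPDFReal_nonneg m v))]
  simpa [integral_gaussianPDFReal_eq_one m hv] using
    abs_setIntegral_fract_le_sub_mul_integral_le (integrable_gaussianPDFReal m v)
      (fun y ↦ ⟨gaussianPDFReal_nonneg m v y, gaussianPDFReal_le_inv_sqrt m v y⟩)
      (monotoneOn_gaussianPDFReal m v) (antitoneOn_gaussianPDFReal m v) hx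

theorem fract_gaussian_tendsto_uniform (m : ℝ) :
    ∀ x ∈ Set.Ioo (0:ℝ) 1,
      Tendsto (fun v : NNReal =>
          ((gaussianReal m v) {y : ℝ | Int.fract y ≤ x}).toReal)
        atTop (nhds x) := by
  intro x hx
  have hdecay : Tendsto (fun v : ℝ≥0 ↦ 3 * (√(2 * π * v))⁻¹) atTop (𝓝 0) := by
    simpa using (tendsto_inv_atTop_zero.comp (tendsto_sqrt_atTop.comp
      ((NNReal.tendsto_coe_atTop.2 tendsto_id).const_mul_atTop two_pi_pos))).const_mul 3
  have hclose : ∀ᶠ v : ℝ≥0 in atTop,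
      ‖(gaussianReal m v {y | Int.fract y ≤ x}).toReal - x‖ ≤ 3 * (√(2 * π * v))⁻¹ := by
    filter_upwards [eventually_ne_atTop 0] with v hv
    exact abs_gaussianReal_fract_le_sub_le m hv (Ioo_subset_Ico_self hx)
  exact tendsto_sub_nhds_zero_iff.mp (squeeze_zero_norm' hclose hdecay)
end
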